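/- arXiv:1602.00414 — 3 statements merged into one kernel-verified Lean document; each statement's English description precedes it below -/
import Mathlib

section
/- If f₁ : ℝⁿ → ℝ is convex differentiable with (1/β)-Lipschitz gradient, then for any 0 < γ < 2β the map x ↦ x − γ∇f₁(x) is nonexpansive: ‖(x − γ∇f₁(x)) − (y − γ∇f₁(y))‖ ≤ ‖x − y‖ for all x, y. -/
/-!
By the Baillon–Haddad theorem, the gradient of a convex function whose gradient is
`(1/β)`-Lipschitz is `β`-cocoercive: `β ‖∇f x - ∇f y‖² ≤ ⟪∇f x - ∇f y, x - y⟫`. It follows by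
comparing the descent lemma at one point with the first-order convexity inequality at the other,
and adding the results for both orders of `x, y`. Writing `d = ∇f x - ∇f y`, cocoercivity gives
`‖(x - y) - γ • d‖² ≤ ‖x - y‖² - γ (2β - γ) ‖d‖²`, which is at most `‖x - y‖²` for `0 ≤ γ ≤ 2β`.
-/

open scoped RealInnerProductSpace

section Gradient

variable {E : Type*} [NormedAddCommGroup E] [InnerProductSpace ℝ E] [CompleteSpace E]
  {f : E → ℝ}

theorem DifferentiableAt.hasDerivAt_comp_add_smul {x h : E} {t : ℝ}
    (hf : DifferentiableAt ℝ f (x + t • h)) :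
    HasDerivAt (fun s : ℝ => f (x + s • h)) ⟪gradient f (x + t • h), h⟫ t := by
  have hline : HasDerivAt (fun s : ℝ => x + s • h) h t := by
    simpa using ((hasDerivAt_id t).smul_const h).const_add x
  rw [inner_gradient_left]
  exact hf.hasFDerivAt.comp_hasDerivAt t hline

theorem ConvexOn.add_inner_gradient_le (hconv : ConvexOn ℝ Set.univ f) {x : E}
    (hf : DifferentiableAt ℝ f x) (y : E) :
    f x + ⟪gradient f x, y - x⟫ ≤ f y := by
  have hline : ConvexOn ℝ Set.univ fun t : ℝ => f (x + t • (y - x)) := by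
    simpa [Function.comp_def] using hconv.comp_affineMap
      (AffineMap.const ℝ ℝ x + (LinearMap.toSpanSingleton ℝ E (y - x)).toAffineMap)
  have hderiv : HasDerivAt (fun t : ℝ => f (x + t • (y - x))) ⟪gradient f x, y - x⟫ 0 := by
    simpa using DifferentiableAt.hasDerivAt_comp_add_smul (t := 0) (h := y - x) (by simpa)
  have hslope := hline.le_slope_of_hasDerivAt (Set.mem_univ 0) (Set.mem_univ 1) one_pos hderiv
  simp only [slope, sub_zero, inv_one, one_smul, zero_smul, add_zero, add_sub_cancel,
    vsub_eq_sub] at hslope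
  linarith

theorem le_add_inner_gradient_add_of_lipschitz (hf : Differentiable ℝ f) {L : ℝ}
    (hlip : ∀ x y, ‖gradient f x - gradient f y‖ ≤ L * ‖x - y‖) (x h : E) :
    f (x + h) ≤ f x + ⟪gradient f x, h⟫ + L / 2 * ‖h‖ ^ 2 := by
  -- `f` along the ray minus its quadratic model; the Lipschitz bound makes `g' ≤ 0` for `t ≥ 0`
  set g : ℝ → ℝ := fun t => f (x + t • h) - t * ⟪gradient f x, h⟫ - L / 2 * t ^ 2 * ‖h‖ ^ 2
  have hg : ∀ t, HasDerivAt g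
      (⟪gradient f (x + t • h) - gradient f x, h⟫ - L * t * ‖h‖ ^ 2) t := by
    intro t
    refine ((((hf (x + t • h)).hasDerivAt_comp_add_smul).sub
      ((hasDerivAt_id t).mul_const ⟪gradient f x, h⟫)).sub
      (((hasDerivAt_pow 2 t).const_mul (L / 2)).mul_const (‖h‖ ^ 2))).congr_deriv ?_
    rw [inner_sub_left]
    ring
  have hanti : AntitoneOn g (Set.Ici 0) := by
    refine antitoneOn_of_hasDerivWithinAt_nonpos (convex_Ici 0)
      (fun t _ => (hg t).continuousAt.continuousWithinAt)
      (fun t _ => (hg t).hasDerivWithinAt) fun t ht => sub_nonpos.2 ?_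
    rw [interior_Ici] at ht
    calc ⟪gradient f (x + t • h) - gradient f x, h⟫
        ≤ ‖gradient f (x + t • h) - gradient f x‖ * ‖h‖ := real_inner_le_norm _ _
      _ ≤ L * ‖t • h‖ * ‖h‖ := by
          gcongr
          simpa using hlip (x + t • h) x
      _ = L * t * ‖h‖ ^ 2 := by
          rw [norm_smul, Real.norm_of_nonneg ht.le]
          ring
  have hg01 : g 1 ≤ g 0 := hanti Set.self_mem_Ici (Set.mem_Ici.2 zero_le_one) zero_le_one
  simp only [g, one_smul, one_mul, zero_smul, add_zero, zero_mul, sub_zero] at hg01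
  linarith

theorem ConvexOn.add_inner_gradient_add_norm_sq_le (hconv : ConvexOn ℝ Set.univ f)
    (hf : Differentiable ℝ f) {β : ℝ} (hβ : β ≠ 0)
    (hlip : ∀ x y, ‖gradient f x - gradient f y‖ ≤ 1 / β * ‖x - y‖) (a b : E) :
    f b + ⟪gradient f b, a - b⟫ + β / 2 * ‖gradient f a - gradient f b‖ ^ 2 ≤ f a := by
  set d := gradient f a - gradient f b
  -- compare `f` at the point `a - β • d` from above (descent) and from below (convexity at `b`)
  have hdescent := le_add_inner_gradient_add_of_lipschitz hf hlip a (-(β • d))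
  have hsupport := hconv.add_inner_gradient_le (hf b) (a + -(β • d))
  have hd : ⟪gradient f a, d⟫ - ⟪gradient f b, d⟫ = ‖d‖ ^ 2 := by
    rw [← inner_sub_left, real_inner_self_eq_norm_sq]
  rw [show a + -(β • d) - b = (a - b) - β • d by abel, inner_sub_right,
    real_inner_smul_right] at hsupport
  rw [inner_neg_right, real_inner_smul_right, norm_neg, norm_smul, mul_pow,
    Real.norm_eq_abs, sq_abs] at hdescent
  have hcoef : 1 / β / 2 * (β ^ 2 * ‖d‖ ^ 2) = β / 2 * ‖d‖ ^ 2 := by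
    field_simp
  rw [hcoef] at hdescent
  linear_combination hsupport + hdescent - β * hd

theorem ConvexOn.mul_norm_gradient_sub_sq_le_inner (hconv : ConvexOn ℝ Set.univ f)
    (hf : Differentiable ℝ f) {β : ℝ} (hβ : β ≠ 0)
    (hlip : ∀ x y, ‖gradient f x - gradient f y‖ ≤ 1 / β * ‖x - y‖) (x y : E) :
    β * ‖gradient f x - gradient f y‖ ^ 2 ≤ ⟪gradient f x - gradient f y, x - y⟫ := by
  have hxy := hconv.add_inner_gradient_add_norm_sq_le hf hβ hlip x y
  have hyx := hconv.add_inner_gradient_add_norm_sq_le hf hβ hlip y x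
  rw [norm_sub_rev, ← neg_sub x y, inner_neg_right] at hyx
  rw [inner_sub_left]
  linarith

end Gradient

theorem norm_sub_smul_le_norm_of_mul_norm_sq_le_inner {E : Type*} [NormedAddCommGroup E]
    [InnerProductSpace ℝ E] {u d : E} {β γ : ℝ} (hd : β * ‖d‖ ^ 2 ≤ ⟪d, u⟫)
    (hγ : 0 ≤ γ) (hγβ : γ ≤ 2 * β) :
    ‖u - γ • d‖ ≤ ‖u‖ := by
  have hsq : ‖u - γ • d‖ ^ 2 ≤ ‖u‖ ^ 2 :=
    calc ‖u - γ • d‖ ^ 2 = ‖u‖ ^ 2 - 2 * γ * ⟪d, u⟫ + γ ^ 2 * ‖d‖ ^ 2 := by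
          rw [norm_sub_sq_real, norm_smul, mul_pow, Real.norm_eq_abs, sq_abs,
            real_inner_smul_right, real_inner_comm]
          ring
      _ ≤ ‖u‖ ^ 2 - γ * (2 * β - γ) * ‖d‖ ^ 2 := by
          have := mul_le_mul_of_nonneg_left hd (by positivity : 0 ≤ 2 * γ)
          linarith
      _ ≤ ‖u‖ ^ 2 := by
          have : 0 ≤ γ * (2 * β - γ) * ‖d‖ ^ 2 := by
            have := sub_nonneg.2 hγβ
            positivity
          linarith
  exact (pow_le_pow_iff_left₀ (norm_nonneg _) (norm_nonneg _) two_ne_zero).1 hsq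

theorem gradient_step_nonexpansive_general (n : ℕ) (f₁ : EuclideanSpace ℝ (Fin n) → ℝ)
    (hconv : ConvexOn ℝ Set.univ f₁) (hdiff : Differentiable ℝ f₁)
    (β : ℝ)
    (hlip : ∀ x y, ‖gradient f₁ x - gradient f₁ y‖ ≤ 1 / β * ‖x - y‖)
    (γ : ℝ) (hγ : 0 < γ) (hγ2 : γ < 2 * β) :
    ∀ x y, ‖(x - γ • gradient f₁ x) - (y - γ • gradient f₁ y)‖ ≤ ‖x - y‖ := by
  intro x y
  have hβ : β ≠ 0 := by linarith
  have hcoco := hconv.mul_norm_gradient_sub_sq_le_inner hdiff hβ hlip x y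
  rw [show x - γ • gradient f₁ x - (y - γ • gradient f₁ y)
      = x - y - γ • (gradient f₁ x - gradient f₁ y) by rw [smul_sub]; abel]
  exact norm_sub_smul_le_norm_of_mul_norm_sq_le_inner hcoco hγ.le hγ2.le

/-- if `f₁` is convex differentiable with `(1/β)`-Lipschitz gradient and
`0 < γ < 2β`, then `x ↦ x − γ∇f₁(x)` is nonexpansive. -/
theorem gradient_step_nonexpansive (n : ℕ) (f₁ : EuclideanSpace ℝ (Fin n) → ℝ)
    (hconv : ConvexOn ℝ Set.univ f₁) (hdiff : Differentiable ℝ f₁)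
    (β : ℝ) (hβ : 0 < β)
    (hlip : ∀ x y, ‖gradient f₁ x - gradient f₁ y‖ ≤ 1 / β * ‖x - y‖)
    (γ : ℝ) (hγ : 0 < γ) (hγ2 : γ < 2 * β) :
    ∀ x y, ‖(x - γ • gradient f₁ x) - (y - γ • gradient f₁ y)‖ ≤ ‖x - y‖ :=
  gradient_step_nonexpansive_general n f₁ hconv hdiff β hlip γ hγ hγ2
end

section
/- Consider the iteration on ℝ³ × ℝ³ given by xᵢ^{k+1} = xᵢᵏ − λAᵢᵀ(A₁x₁ᵏ + A₂x₂ᵏ + A₃x₃ᵏ) − λAᵢᵀvᵏ and v^{k+1} = vᵏ + (A₁x₁^{k+1} + A₂x₂^{k+1} + A₃x₃^{k+1}), where A = (A₁,A₂,A₃) is the nonsingular 3×3 matrix with rows (1,1,1), (1,1,2), (1,2,2). For 0 < λ < 1/Σᵢ λ_max(AᵢᵀAᵢ), the sequence (x₁ᵏ, x₂ᵏ, x₃ᵏ) converges to (0,0,0), the unique solution of A₁x₁ + A₂x₂ + A₃x₃ = 0. -/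
open Filter

private def Wf (lam u0 u1 u2 v0 v1 v2 : ℝ) : ℝ :=
  u0^2+u1^2+u2^2
  - lam*(3*u0^2+6*u1^2+9*u2^2+8*u0*u1+10*u0*u2+14*u1*u2)
  + lam*(3*v0^2+6*v1^2+9*v2^2+8*v0*v1+10*v0*v2+14*v1*v2)

private lemma step_ineq (lam u0 u1 u2 v0 v1 v2 w0 w1 w2 p0 p1 p2 : ℝ)
    (h0 : 0 < lam) (h18 : lam ≤ 1/18)
    (e0 : w0 = u0 - lam*(3*(u0+v0)+4*(u1+v1)+5*(u2+v2)))
    (e1 : w1 = u1 - lam*(4*(u0+v0)+6*(u1+v1)+7*(u2+v2)))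
    (e2 : w2 = u2 - lam*(5*(u0+v0)+7*(u1+v1)+9*(u2+v2)))
    (f0 : p0 = v0 + w0) (f1 : p1 = v1 + w1) (f2 : p2 = v2 + w2) :
    Wf lam w0 w1 w2 p0 p1 p2 ≤ (1-lam/10) * Wf lam u0 u1 u2 v0 v1 v2 := by
  subst e0 e1 e2 f0 f1 f2
  have hPu : (0:ℝ) ≤ 29*u0^2+59*u1^2+89*u2^2+80*u0*u1+100*u0*u2+140*u1*u2 := by
    nlinarith [sq_nonneg (29*u0+40*u1+50*u2), sq_nonneg (37*u1+10*u2), sq_nonneg u2]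
  have hRu : (0:ℝ) ≤ 25*u0^2+58*u1^2+61*u2^2+28*u0*u1+50*u0*u2+34*u1*u2 := by
    nlinarith [sq_nonneg (25*u0+14*u1+25*u2), sq_nonneg (418*u1+25*u2), sq_nonneg u2]
  have hSv : (0:ℝ) ≤ 497*v0^2+1004*v1^2+1541*v2^2+1412*v0*v1+1750*v0*v2+2486*v1*v2 := by
    nlinarith [sq_nonneg (497*v0+706*v1+875*v2), sq_nonneg (184*v1+7*v2), sq_nonneg v2]
  have key : 10*((1-lam/10) * Wf lam u0 u1 u2 v0 v1 v2
      - Wf lam (u0 - lam*(3*(u0+v0)+4*(u1+v1)+5*(u2+v2)))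
              (u1 - lam*(4*(u0+v0)+6*(u1+v1)+7*(u2+v2)))
              (u2 - lam*(5*(u0+v0)+7*(u1+v1)+9*(u2+v2)))
              (v0 + (u0 - lam*(3*(u0+v0)+4*(u1+v1)+5*(u2+v2))))
              (v1 + (u1 - lam*(4*(u0+v0)+6*(u1+v1)+7*(u2+v2))))
              (v2 + (u2 - lam*(5*(u0+v0)+7*(u1+v1)+9*(u2+v2)))))
      = lam*((1-18*lam)*(29*u0^2+59*u1^2+89*u2^2+80*u0*u1+100*u0*u2+140*u1*u2)
            + lam*(25*u0^2+58*u1^2+61*u2^2+28*u0*u1+50*u0*u2+34*u1*u2)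
            + lam*(497*v0^2+1004*v1^2+1541*v2^2+1412*v0*v1+1750*v0*v2+2486*v1*v2)) := by
    unfold Wf; ring
  nlinarith [mul_nonneg (mul_nonneg h0.le (by linarith : (0:ℝ) ≤ 1-18*lam)) hPu,
    mul_nonneg (mul_nonneg h0.le h0.le) hRu,
    mul_nonneg (mul_nonneg h0.le h0.le) hSv]

private lemma lower_bd (lam u0 u1 u2 v0 v1 v2 : ℝ) (h0 : 0 < lam) :
    (1-18*lam)*(u0^2+u1^2+u2^2) ≤ Wf lam u0 u1 u2 v0 v1 v2 := by
  have hTu : (0:ℝ) ≤ 15*u0^2+12*u1^2+9*u2^2-8*u0*u1-10*u0*u2-14*u1*u2 := by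
    nlinarith [sq_nonneg (15*u0-4*u1-5*u2), sq_nonneg (164*u1-125*u2), sq_nonneg u2]
  have hMv : (0:ℝ) ≤ 3*v0^2+6*v1^2+9*v2^2+8*v0*v1+10*v0*v2+14*v1*v2 := by
    nlinarith [sq_nonneg (3*v0+4*v1+5*v2), sq_nonneg (2*v1+v2), sq_nonneg v2]
  have key : Wf lam u0 u1 u2 v0 v1 v2 - (1-18*lam)*(u0^2+u1^2+u2^2)
      = lam*((15*u0^2+12*u1^2+9*u2^2-8*u0*u1-10*u0*u2-14*u1*u2)
           + (3*v0^2+6*v1^2+9*v2^2+8*v0*v1+10*v0*v2+14*v1*v2)) := by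
    unfold Wf; ring
  nlinarith [mul_nonneg h0.le hTu, mul_nonneg h0.le hMv]

private lemma tendsto_of_sq_le (g : ℕ → ℝ) (C r : ℝ) (h0 : 0 ≤ r) (h1 : r < 1)
    (hb : ∀ k, (g k)^2 ≤ C * r^k) : Tendsto g atTop (nhds 0) := by
  have h2 : Tendsto (fun k : ℕ => C * r^k) atTop (nhds 0) := by
    simpa using (tendsto_pow_atTop_nhds_zero_of_lt_one h0 h1).const_mul C
  have hsq : Tendsto (fun k => (g k)^2) atTop (nhds 0) :=
    squeeze_zero (fun k => sq_nonneg _) hb h2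
  have habs : Tendsto (fun k => |g k|) atTop (nhds 0) := by
    have h3 := (Real.continuous_sqrt.tendsto 0).comp hsq
    have h4 : ((fun x => Real.sqrt x) ∘ fun k => g k ^ 2) = fun k => |g k| := by
      funext k; simp [Function.comp, Real.sqrt_sq_eq_abs]
    rw [h4] at h3; simpa using h3
  have hneg : Tendsto (fun k => -|g k|) atTop (nhds 0) := by
    simpa using habs.neg
  exact tendsto_of_tendsto_of_tendsto_of_le_of_le hneg habs
    (fun k => neg_abs_le _) (fun k => le_abs_self _)

/-- the PDFP iteration for the linear system `A₁x₁ + A₂x₂ + A₃x₃ = 0`, with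
`A₁ = (1,1,1)ᵀ, A₂ = (1,1,2)ᵀ, A₃ = (1,2,2)ᵀ` and `0 < λ < 1/Σᵢλ_max(AᵢᵀAᵢ)`,
converges to `(0,0,0)`, the unique solution. -/
theorem pdfp_linear_system_converges
    (A : Fin 3 → Fin 3 → ℝ)
    (hA : A = ![![1, 1, 1], ![1, 1, 2], ![1, 2, 2]])
    (lam : ℝ) (hlam : 0 < lam) (hlam2 : lam < 1 / ∑ i, ∑ j, (A i j) ^ 2)
    (x : Fin 3 → ℕ → ℝ) (v : ℕ → Fin 3 → ℝ)
    (hx : ∀ i k, x i (k + 1)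
      = x i k - lam * (∑ j, A i j * (∑ i', x i' k * A i' j))
          - lam * (∑ j, A i j * v k j))
    (hv : ∀ k j, v (k + 1) j = v k j + ∑ i, x i (k + 1) * A i j) :
    (∀ y : Fin 3 → ℝ, (∀ j, ∑ i, y i * A i j = 0) → y = 0) ∧
    ∀ i, Tendsto (fun k => x i k) atTop (nhds 0) := by
  subst hA
  have hlam18 : lam < 1/18 := by
    norm_num [Fin.sum_univ_three, Matrix.cons_val_zero, Matrix.cons_val_one, Matrix.head_cons,
      Matrix.cons_val_two, Matrix.tail_cons, Matrix.vecHead, Matrix.vecTail] at hlam2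
    linarith
  constructor
  · intro y hy
    have h0 := hy 0
    have h1 := hy 1
    have h2 := hy 2
    simp [Fin.sum_univ_three, Matrix.cons_val_zero, Matrix.cons_val_one, Matrix.head_cons,
      Matrix.cons_val_two, Matrix.tail_cons, Matrix.vecHead, Matrix.vecTail] at h0 h1 h2
    funext i
    fin_cases i <;> simp <;> linarith
  · -- recursions for u = Aᵀx and v
    have e0 : ∀ k, x 0 (k+1) + x 1 (k+1) + x 2 (k+1)
        = (x 0 k + x 1 k + x 2 k)
          - lam*(3*((x 0 k + x 1 k + x 2 k) + v k 0)
                +4*((x 0 k + x 1 k + 2*x 2 k) + v k 1)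
                +5*((x 0 k + 2*x 1 k + 2*x 2 k) + v k 2)) := by
      intro k
      rw [hx 0 k, hx 1 k, hx 2 k]
      simp [Fin.sum_univ_three, Matrix.cons_val_zero, Matrix.cons_val_one, Matrix.head_cons,
        Matrix.cons_val_two, Matrix.tail_cons, Matrix.vecHead, Matrix.vecTail]
      ring
    have e1 : ∀ k, x 0 (k+1) + x 1 (k+1) + 2*x 2 (k+1)
        = (x 0 k + x 1 k + 2*x 2 k)
          - lam*(4*((x 0 k + x 1 k + x 2 k) + v k 0)
                +6*((x 0 k + x 1 k + 2*x 2 k) + v k 1)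
                +7*((x 0 k + 2*x 1 k + 2*x 2 k) + v k 2)) := by
      intro k
      rw [hx 0 k, hx 1 k, hx 2 k]
      simp [Fin.sum_univ_three, Matrix.cons_val_zero, Matrix.cons_val_one, Matrix.head_cons,
        Matrix.cons_val_two, Matrix.tail_cons, Matrix.vecHead, Matrix.vecTail]
      ring
    have e2 : ∀ k, x 0 (k+1) + 2*x 1 (k+1) + 2*x 2 (k+1)
        = (x 0 k + 2*x 1 k + 2*x 2 k)
          - lam*(5*((x 0 k + x 1 k + x 2 k) + v k 0)
                +7*((x 0 k + x 1 k + 2*x 2 k) + v k 1)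
                +9*((x 0 k + 2*x 1 k + 2*x 2 k) + v k 2)) := by
      intro k
      rw [hx 0 k, hx 1 k, hx 2 k]
      simp [Fin.sum_univ_three, Matrix.cons_val_zero, Matrix.cons_val_one, Matrix.head_cons,
        Matrix.cons_val_two, Matrix.tail_cons, Matrix.vecHead, Matrix.vecTail]
      ring
    have f0 : ∀ k, v (k+1) 0 = v k 0 + (x 0 (k+1) + x 1 (k+1) + x 2 (k+1)) := by
      intro k
      rw [hv k 0]
      simp [Fin.sum_univ_three, Matrix.cons_val_zero, Matrix.cons_val_one, Matrix.head_cons,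
        Matrix.cons_val_two, Matrix.tail_cons, Matrix.vecHead, Matrix.vecTail]
    have f1 : ∀ k, v (k+1) 1 = v k 1 + (x 0 (k+1) + x 1 (k+1) + 2*x 2 (k+1)) := by
      intro k
      rw [hv k 1]
      simp [Fin.sum_univ_three, Matrix.cons_val_zero, Matrix.cons_val_one, Matrix.head_cons,
        Matrix.cons_val_two, Matrix.tail_cons, Matrix.vecHead, Matrix.vecTail]
      ring
    have f2 : ∀ k, v (k+1) 2 = v k 2 + (x 0 (k+1) + 2*x 1 (k+1) + 2*x 2 (k+1)) := by
      intro k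
      rw [hv k 2]
      simp [Fin.sum_univ_three, Matrix.cons_val_zero, Matrix.cons_val_one, Matrix.head_cons,
        Matrix.cons_val_two, Matrix.tail_cons, Matrix.vecHead, Matrix.vecTail]
      ring
    -- Lyapunov decay
    have hW : ∀ k, Wf lam (x 0 k + x 1 k + x 2 k) (x 0 k + x 1 k + 2*x 2 k)
        (x 0 k + 2*x 1 k + 2*x 2 k) (v k 0) (v k 1) (v k 2)
        ≤ (1-lam/10)^k * Wf lam (x 0 0 + x 1 0 + x 2 0) (x 0 0 + x 1 0 + 2*x 2 0)
            (x 0 0 + 2*x 1 0 + 2*x 2 0) (v 0 0) (v 0 1) (v 0 2) := by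
      intro k
      induction k with
      | zero => simp
      | succ n ih =>
        have hstep := step_ineq lam (x 0 n + x 1 n + x 2 n) (x 0 n + x 1 n + 2*x 2 n)
          (x 0 n + 2*x 1 n + 2*x 2 n) (v n 0) (v n 1) (v n 2)
          (x 0 (n+1) + x 1 (n+1) + x 2 (n+1)) (x 0 (n+1) + x 1 (n+1) + 2*x 2 (n+1))
          (x 0 (n+1) + 2*x 1 (n+1) + 2*x 2 (n+1)) (v (n+1) 0) (v (n+1) 1) (v (n+1) 2)
          hlam hlam18.le (e0 n) (e1 n) (e2 n) (f0 n) (f1 n) (f2 n)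
        have hpos : (0:ℝ) ≤ 1 - lam/10 := by linarith
        have h2 := mul_le_mul_of_nonneg_left ih hpos
        have h3 : (1-lam/10) * ((1-lam/10)^n * Wf lam (x 0 0 + x 1 0 + x 2 0)
            (x 0 0 + x 1 0 + 2*x 2 0) (x 0 0 + 2*x 1 0 + 2*x 2 0) (v 0 0) (v 0 1) (v 0 2))
            = (1-lam/10)^(n+1) * Wf lam (x 0 0 + x 1 0 + x 2 0) (x 0 0 + x 1 0 + 2*x 2 0)
              (x 0 0 + 2*x 1 0 + 2*x 2 0) (v 0 0) (v 0 1) (v 0 2) := by ring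
        linarith
    set W0 : ℝ := Wf lam (x 0 0 + x 1 0 + x 2 0) (x 0 0 + x 1 0 + 2*x 2 0)
        (x 0 0 + 2*x 1 0 + 2*x 2 0) (v 0 0) (v 0 1) (v 0 2) with hW0
    have hε : (0:ℝ) < 1 - 18*lam := by linarith
    set C : ℝ := W0 / (1 - 18*lam) with hC
    have hr0 : (0:ℝ) ≤ 1 - lam/10 := by linarith
    have hr1 : 1 - lam/10 < 1 := by linarith
    -- squared bounds on u components
    have hbd : ∀ k, (x 0 k + x 1 k + x 2 k)^2 ≤ C * (1-lam/10)^k ∧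
        (x 0 k + x 1 k + 2*x 2 k)^2 ≤ C * (1-lam/10)^k ∧
        (x 0 k + 2*x 1 k + 2*x 2 k)^2 ≤ C * (1-lam/10)^k := by
      intro k
      have hlb := lower_bd lam (x 0 k + x 1 k + x 2 k) (x 0 k + x 1 k + 2*x 2 k)
        (x 0 k + 2*x 1 k + 2*x 2 k) (v k 0) (v k 1) (v k 2) hlam
      have hWk := hW k
      have hCk : C * (1-lam/10)^k = ((1-lam/10)^k * W0) / (1 - 18*lam) := by
        rw [hC]; ring
      refine ⟨?_, ?_, ?_⟩ <;>
        · rw [hCk, le_div_iff₀ hε]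
          nlinarith [sq_nonneg (x 0 k + x 1 k + x 2 k), sq_nonneg (x 0 k + x 1 k + 2*x 2 k),
            sq_nonneg (x 0 k + 2*x 1 k + 2*x 2 k)]
    have ta : Tendsto (fun k => x 0 k + x 1 k + x 2 k) atTop (nhds 0) :=
      tendsto_of_sq_le _ C _ hr0 hr1 (fun k => (hbd k).1)
    have tb : Tendsto (fun k => x 0 k + x 1 k + 2*x 2 k) atTop (nhds 0) :=
      tendsto_of_sq_le _ C _ hr0 hr1 (fun k => (hbd k).2.1)
    have tc : Tendsto (fun k => x 0 k + 2*x 1 k + 2*x 2 k) atTop (nhds 0) :=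
      tendsto_of_sq_le _ C _ hr0 hr1 (fun k => (hbd k).2.2)
    intro i
    fin_cases i
    · have h : (fun k => x 0 k) = fun k => 2*(x 0 k + x 1 k + x 2 k)
          - (x 0 k + 2*x 1 k + 2*x 2 k) := by funext k; ring
      show Tendsto (fun k => x 0 k) atTop (nhds 0)
      rw [h]
      simpa using ((ta.const_mul 2).sub tc)
    · have h : (fun k => x 1 k) = fun k => (x 0 k + 2*x 1 k + 2*x 2 k)
          - (x 0 k + x 1 k + 2*x 2 k) := by funext k; ring
      show Tendsto (fun k => x 1 k) atTop (nhds 0)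
      rw [h]
      simpa using (tc.sub tb)
    · have h : (fun k => x 2 k) = fun k => (x 0 k + x 1 k + 2*x 2 k)
          - (x 0 k + x 1 k + x 2 k) := by funext k; ring
      show Tendsto (fun k => x 2 k) atTop (nhds 0)
      rw [h]
      simpa using (tb.sub ta)
end

section
/- If x* minimizes f₁(x) + f₂(Bx + b) + f₃(x) where f₁ is convex differentiable and f₂, f₃ are proper lsc convex with f₂∘(B·+b) and f₃ having full domain intersection conditions (e.g., f₂ finite-valued), then there exists v* ∈ ∂f₂(Bx* + b) such that x* = prox_{γf₃}(x* − γ∇f₁(x*) − γBᵀv*) for every γ > 0. -/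
/-!
Separating the point `(0, p⋆)`, `p⋆` the optimal value, from the open convex set of pairs `(u, r)`
with `r > f₁ x + f₂ (B x + b + u) + f₃ x` for some `x` yields a multiplier `v`; openness is where
the continuity of `f₂` enters. Then `v ∈ ∂f₂(B x⋆ + b)` and `x⋆` minimizes `f₁ + f₃ + ⟪Bᵀv, ·⟫`,
so Fermat's rule along segments gives `-∇f₁ x⋆ - Bᵀv ∈ ∂f₃ x⋆`, which is the variational
inequality characterizing `x⋆ = prox_{γf₃}(x⋆ - γ∇f₁ x⋆ - γBᵀv)`.
-/

open scoped RealInnerProductSpace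

open Set

theorem exists_inner_lt_of_isOpen_of_convex {F : Type*} [NormedAddCommGroup F]
    [InnerProductSpace ℝ F] [CompleteSpace F] {C : Set (F × ℝ)} (hopen : IsOpen C)
    (hconv : Convex ℝ C) {c : ℝ} (hc : (0, c) ∉ C) (hvert : ∀ r, c < r → (0, r) ∈ C) :
    ∃ v : F, ∀ p ∈ C, c + ⟪v, p.1⟫ < p.2 := by
  obtain ⟨ℓ, hℓ⟩ := geometric_hahn_banach_open_point hconv hopen hc
  -- `hvert` forces the separating functional to be non-vertical, i.e. `ℓ (0, 1) < 0`.
  set β := ℓ (0, 1)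
  have hsplit : ∀ p : F × ℝ, ℓ p = ℓ (p.1, 0) + p.2 * β := fun p => by
    rw [← ℓ.comp_inl_add_comp_inr, ← smul_eq_mul, ← map_smul]; simp
  have hβ : β < 0 := by
    have := hℓ _ (hvert (c + 1) (lt_add_one c))
    rw [hsplit, hsplit (0, c)] at this
    simp only at this
    linarith
  refine ⟨(-β)⁻¹ • (InnerProductSpace.toDual ℝ F).symm (ℓ.comp (.inl ℝ F ℝ)), fun p hp => ?_⟩
  have h := hℓ p hp
  rw [hsplit, hsplit (0, c)] at h
  rw [real_inner_smul_left, InnerProductSpace.toDual_symm_apply, ← lt_sub_iff_add_lt',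
    inv_mul_lt_iff₀ (neg_pos.2 hβ)]
  simp only [ContinuousLinearMap.comp_apply, ContinuousLinearMap.inl_apply, Prod.mk_zero_zero,
    map_zero] at h ⊢
  linarith

theorem le_add_apply_sub_of_isMinOn_add {E : Type*} [NormedAddCommGroup E] [NormedSpace ℝ E]
    {S : Set E} {f h : E → ℝ} {f' : E →L[ℝ] ℝ} {x₀ : E} (hh : ConvexOn ℝ S h)
    (hf : HasFDerivAt f f' x₀) (hx₀ : x₀ ∈ S) (hmin : IsMinOn (f + h) S x₀) {y : E} (hy : y ∈ S) :
    h x₀ ≤ h y + f' (y - x₀) := by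
  -- By convexity `(f + h) (x₀ + t • (y - x₀)) ≤ ψ t + h x₀`, with equality at `t = 0`.
  set ψ : ℝ → ℝ := fun t => f (x₀ + t • (y - x₀)) + t * (h y - h x₀)
  have hψmin : IsMinOn ψ (Icc 0 1) 0 := by
    rintro t ⟨ht₀, ht₁⟩
    have hcomb : (1 - t) • x₀ + t • y = x₀ + t • (y - x₀) := by module
    have hxt : x₀ + t • (y - x₀) ∈ S := hcomb ▸ hh.1 hx₀ hy (by linarith) ht₀ (by ring)
    have hconv : h ((1 - t) • x₀ + t • y) ≤ (1 - t) • h x₀ + t • h y :=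
      hh.2 hx₀ hy (by linarith) ht₀ (by ring)
    rw [hcomb, smul_eq_mul, smul_eq_mul] at hconv
    have hmin' : f x₀ + h x₀ ≤ f (x₀ + t • (y - x₀)) + h (x₀ + t • (y - x₀)) := hmin hxt
    simp only [mem_ofPred_eq, ψ, zero_smul, add_zero, zero_mul]
    linarith
  have hψ : HasDerivAt ψ (f' (y - x₀) + (h y - h x₀)) 0 := by
    have hline : HasDerivAt (fun t : ℝ => x₀ + t • (y - x₀)) (y - x₀) 0 := by
      simpa using ((hasDerivAt_id (0 : ℝ)).smul_const (y - x₀)).const_add x₀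
    have hf0 : HasFDerivAt f f' (x₀ + (0 : ℝ) • (y - x₀)) := by simpa using hf
    exact (hf0.comp_hasDerivAt 0 hline).add ((hasDerivAt_id 0).mul_const _ |>.congr_deriv (by simp))
  have hone : (1 : ℝ) ∈ posTangentConeAt (Icc (0 : ℝ) 1) 0 :=
    mem_posTangentConeAt_of_segment_subset (by simp [segment_eq_Icc])
  have hderiv := hψmin.localize.hasFDerivWithinAt_nonneg hψ.hasFDerivAt.hasFDerivWithinAt hone
  rw [ContinuousLinearMap.toSpanSingleton_apply, one_smul] at hderiv
  linarith

theorem le_add_inner_of_isMinOn_add_inner {E : Type*} [NormedAddCommGroup E]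
    [InnerProductSpace ℝ E] [CompleteSpace E] {S : Set E} {f φ : E → ℝ} {g a x₀ : E}
    (hφ : ConvexOn ℝ S φ) (hf : HasGradientAt f g x₀) (hx₀ : x₀ ∈ S)
    (hmin : IsMinOn (fun x => f x + φ x + ⟪a, x⟫) S x₀) {y : E} (hy : y ∈ S) :
    φ x₀ ≤ φ y + ⟪g + a, y - x₀⟫ := by
  have hψ : ConvexOn ℝ S fun x => φ x + ⟪a, x⟫ := hφ.add ((innerₛₗ ℝ a).convexOn hφ.1)
  have hminψ : IsMinOn (f + fun x => φ x + ⟪a, x⟫) S x₀ := fun x hx => by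
    simpa only [mem_ofPred_eq, Pi.add_apply, add_assoc] using hmin hx
  have hfermat := le_add_apply_sub_of_isMinOn_add hψ hf.hasFDerivAt hx₀ hminψ hy
  rw [InnerProductSpace.toDual_apply_apply] at hfermat
  rw [inner_add_left, inner_sub_right a]
  linarith

section Perturbation

variable {E F : Type*} {S : Set E} {φ : E → ℝ} {g : F → ℝ}

theorem isOpen_setOf_exists_add_comp_lt [TopologicalSpace F] [AddCommGroup F] [ContinuousAdd F]
    (hg : Continuous g) (B : E → F) (b : F) :
    IsOpen {p : F × ℝ | ∃ x ∈ S, φ x + g (B x + b + p.1) < p.2} := by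
  rw [isOpen_iff_forall_mem_open]
  rintro p ⟨x, hx, hlt⟩
  refine ⟨{q | φ x + g (B x + b + q.1) < q.2}, fun q hq => ⟨x, hx, hq⟩, ?_, hlt⟩
  exact isOpen_lt (by fun_prop) continuous_snd

theorem convex_setOf_exists_add_comp_lt [AddCommGroup E] [Module ℝ E] [AddCommGroup F]
    [Module ℝ F] (hφ : ConvexOn ℝ S φ) (hg : ConvexOn ℝ univ g) (B : E →ₗ[ℝ] F) (b : F) :
    Convex ℝ {p : F × ℝ | ∃ x ∈ S, φ x + g (B x + b + p.1) < p.2} := by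
  rw [convex_iff_forall_pos]
  rintro ⟨u₁, r₁⟩ ⟨x₁, hx₁, h₁⟩ ⟨u₂, r₂⟩ ⟨x₂, hx₂, h₂⟩ s t hs ht hst
  refine ⟨s • x₁ + t • x₂, hφ.1 hx₁ hx₂ hs.le ht.le hst, ?_⟩
  have hφx := hφ.2 hx₁ hx₂ hs.le ht.le hst
  have hgx := hg.2 (mem_univ (B x₁ + b + u₁)) (mem_univ (B x₂ + b + u₂)) hs.le ht.le hst
  have harg : B (s • x₁ + t • x₂) + b + (s • (u₁, r₁) + t • (u₂, r₂)).1
      = s • (B x₁ + b + u₁) + t • (B x₂ + b + u₂) := by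
    simp only [map_add, map_smul, Prod.fst_add, Prod.smul_fst]
    linear_combination (norm := module) -hst • b
  simp only [smul_eq_mul] at hφx hgx h₁ h₂
  simp only [harg, Prod.snd_add, Prod.smul_snd, smul_eq_mul]
  nlinarith [mul_lt_mul_of_pos_left h₁ hs, mul_lt_mul_of_pos_left h₂ ht]

end Perturbation

section Multiplier

variable {E F : Type*} [AddCommGroup E] [Module ℝ E] [NormedAddCommGroup F]
  [InnerProductSpace ℝ F] [CompleteSpace F] {S : Set E} {φ : E → ℝ} {g : F → ℝ}

theorem exists_inner_le_add_comp_add_of_isMinOn (hφ : ConvexOn ℝ S φ) (hg : ConvexOn ℝ univ g)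
    (hgc : Continuous g) (B : E →ₗ[ℝ] F) (b : F) {x₀ : E} (hx₀ : x₀ ∈ S)
    (hmin : IsMinOn (fun x => φ x + g (B x + b)) S x₀) :
    ∃ v : F, ∀ x ∈ S, ∀ u, φ x₀ + g (B x₀ + b) + ⟪v, u⟫ ≤ φ x + g (B x + b + u) := by
  have hnot : (0, φ x₀ + g (B x₀ + b)) ∉ {p : F × ℝ | ∃ x ∈ S, φ x + g (B x + b + p.1) < p.2} := by
    rintro ⟨x, hx, hlt⟩
    rw [add_zero] at hlt
    exact (hmin hx).not_gt hlt
  obtain ⟨v, hv⟩ := exists_inner_lt_of_isOpen_of_convex (isOpen_setOf_exists_add_comp_lt hgc B b)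
    (convex_setOf_exists_add_comp_lt hφ hg B b) hnot
    (fun r hr => ⟨x₀, hx₀, by rwa [add_zero]⟩)
  exact ⟨v, fun x hx u => le_of_forall_gt_imp_ge_of_dense fun r hr => (hv (u, r) ⟨x, hx, hr⟩).le⟩

theorem exists_subgradient_of_isMinOn_add_comp (hφ : ConvexOn ℝ S φ) (hg : ConvexOn ℝ univ g)
    (hgc : Continuous g) (B : E →ₗ[ℝ] F) (b : F) {x₀ : E} (hx₀ : x₀ ∈ S)
    (hmin : IsMinOn (fun x => φ x + g (B x + b)) S x₀) :
    ∃ v : F, (∀ u, g (B x₀ + b) + ⟪v, u - (B x₀ + b)⟫ ≤ g u) ∧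
      IsMinOn (fun x => φ x + ⟪v, B x⟫) S x₀ := by
  obtain ⟨v, hv⟩ := exists_inner_le_add_comp_add_of_isMinOn hφ hg hgc B b hx₀ hmin
  refine ⟨v, fun u => ?_, fun x hx => ?_⟩
  · have := hv x₀ hx₀ (u - (B x₀ + b))
    rw [add_sub_cancel] at this
    linarith
  · have := hv x hx (B x₀ - B x)
    rw [show B x + b + (B x₀ - B x) = B x₀ + b by abel, inner_sub_right] at this
    show φ x₀ + ⟪v, B x₀⟫ ≤ φ x + ⟪v, B x⟫
    linarith

end Multiplier

section ERealConvex

variable {E : Type*} [AddCommGroup E] [Module ℝ E] {f : E → EReal}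

theorem le_coe_toReal_combo_of_ne_top (hbot : ∀ x, f x ≠ ⊥)
    (hconv : ∀ x y : E, ∀ t : ℝ, 0 ≤ t → t ≤ 1 →
      f (t • x + (1 - t) • y) ≤ (t : EReal) * f x + ((1 - t : ℝ) : EReal) * f y)
    {x y : E} (hx : f x ≠ ⊤) (hy : f y ≠ ⊤) {t : ℝ} (ht₀ : 0 ≤ t) (ht₁ : t ≤ 1) :
    f (t • x + (1 - t) • y) ≤ ((t * (f x).toReal + (1 - t) * (f y).toReal : ℝ) : EReal) := by
  have := hconv x y t ht₀ ht₁
  rw [← EReal.coe_toReal hx (hbot x), ← EReal.coe_toReal hy (hbot y)] at this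
  exact_mod_cast this

theorem convex_setOf_ne_top (hbot : ∀ x, f x ≠ ⊥)
    (hconv : ∀ x y : E, ∀ t : ℝ, 0 ≤ t → t ≤ 1 →
      f (t • x + (1 - t) • y) ≤ (t : EReal) * f x + ((1 - t : ℝ) : EReal) * f y) :
    Convex ℝ {x | f x ≠ ⊤} := by
  intro x hx y hy s t hs ht hst
  obtain rfl : t = 1 - s := by linarith
  exact ne_top_of_le_ne_top (EReal.coe_ne_top _)
    (le_coe_toReal_combo_of_ne_top hbot hconv hx hy hs (by linarith))

theorem convexOn_toReal_setOf_ne_top (hbot : ∀ x, f x ≠ ⊥)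
    (hconv : ∀ x y : E, ∀ t : ℝ, 0 ≤ t → t ≤ 1 →
      f (t • x + (1 - t) • y) ≤ (t : EReal) * f x + ((1 - t : ℝ) : EReal) * f y) :
    ConvexOn ℝ {x | f x ≠ ⊤} fun x => (f x).toReal := by
  refine ⟨convex_setOf_ne_top hbot hconv, fun x hx y hy s t hs ht hst => ?_⟩
  obtain rfl : t = 1 - s := by linarith
  have h := le_coe_toReal_combo_of_ne_top hbot hconv hx hy hs (by linarith)
  simpa only [EReal.toReal_coe, smul_eq_mul] using
    EReal.toReal_le_toReal h (hbot _) (EReal.coe_ne_top _)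

end ERealConvex

theorem mul_add_half_norm_sub_sq_le {E : Type*} [NormedAddCommGroup E] [InnerProductSpace ℝ E]
    {x y w : E} {a c : ℝ} (h : a ≤ c + ⟪w, y - x⟫) {γ : ℝ} (hγ : 0 ≤ γ) :
    γ * a + 1 / 2 * ‖x - γ • w - x‖ ^ 2 ≤ γ * c + 1 / 2 * ‖x - γ • w - y‖ ^ 2 := by
  have hx : ‖x - γ • w - x‖ ^ 2 = γ ^ 2 * ‖w‖ ^ 2 := by
    rw [sub_sub_cancel_left, norm_neg, norm_smul, mul_pow, Real.norm_eq_abs, sq_abs]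
  have hy : ‖x - γ • w - y‖ ^ 2 = ‖x - y‖ ^ 2 + 2 * γ * ⟪w, y - x⟫ + γ ^ 2 * ‖w‖ ^ 2 := by
    rw [sub_right_comm, norm_sub_sq_real, real_inner_smul_right, norm_smul, mul_pow,
      Real.norm_eq_abs, sq_abs, ← neg_sub y x, inner_neg_left, real_inner_comm]
    ring
  rw [hx, hy]
  nlinarith [mul_le_mul_of_nonneg_left h hγ, sq_nonneg ‖x - y‖]

theorem optimality_prox_fixed_point_general (n m : ℕ)
    (f₁ : EuclideanSpace ℝ (Fin n) → ℝ)
    (hconv₁ : ConvexOn ℝ Set.univ f₁) (hdiff₁ : Differentiable ℝ f₁)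
    (f₂ : EuclideanSpace ℝ (Fin m) → ℝ)
    (hconv₂ : ConvexOn ℝ Set.univ f₂)
    (f₃ : EuclideanSpace ℝ (Fin n) → EReal)
    (hbot : ∀ x, f₃ x ≠ ⊥) (htop : ∃ x, f₃ x ≠ ⊤)
    (hconv₃ : ∀ x y : EuclideanSpace ℝ (Fin n), ∀ t : ℝ, 0 ≤ t → t ≤ 1 →
      f₃ (t • x + (1 - t) • y) ≤ (t : EReal) * f₃ x + ((1 - t : ℝ) : EReal) * f₃ y)
    (B : EuclideanSpace ℝ (Fin n) →L[ℝ] EuclideanSpace ℝ (Fin m))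
    (b : EuclideanSpace ℝ (Fin m))
    (xs : EuclideanSpace ℝ (Fin n))
    (hmin : ∀ y, ((f₁ xs + f₂ (B xs + b) : ℝ) : EReal) + f₃ xs
      ≤ ((f₁ y + f₂ (B y + b) : ℝ) : EReal) + f₃ y) :
    ∃ v : EuclideanSpace ℝ (Fin m),
      (∀ u, f₂ (B xs + b) + ⟪v, u - (B xs + b)⟫ ≤ f₂ u) ∧
      ∀ γ : ℝ, 0 < γ →
        ∀ y, (γ : EReal) * f₃ xs
            + ((1 / 2 * ‖(xs - γ • gradient f₁ xs - γ • B.adjoint v) - xs‖ ^ 2 : ℝ) : EReal)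
          ≤ (γ : EReal) * f₃ y
            + ((1 / 2 * ‖(xs - γ • gradient f₁ xs - γ • B.adjoint v) - y‖ ^ 2 : ℝ) : EReal) := by
  set S := {x | f₃ x ≠ ⊤}
  set φ := fun x => (f₃ x).toReal
  have hφ : ConvexOn ℝ S φ := convexOn_toReal_setOf_ne_top hbot hconv₃
  have hcoe : ∀ x ∈ S, f₃ x = (φ x : EReal) := fun x hx => (EReal.coe_toReal hx (hbot x)).symm
  have hxs : xs ∈ S := by
    obtain ⟨y, hy⟩ := htop
    intro hxs
    have := hmin y
    rw [hxs, EReal.coe_add_top, hcoe y hy, ← EReal.coe_add, top_le_iff] at this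
    exact EReal.coe_ne_top _ this
  have hminS : IsMinOn (fun x => (f₁ x + φ x) + f₂ (B x + b)) S xs := fun x hx => by
    have := hmin x
    rw [hcoe xs hxs, hcoe x hx, ← EReal.coe_add, ← EReal.coe_add, EReal.coe_le_coe_iff] at this
    show f₁ xs + φ xs + f₂ (B xs + b) ≤ f₁ x + φ x + f₂ (B x + b)
    linarith
  obtain ⟨v, hv, hvmin⟩ := exists_subgradient_of_isMinOn_add_comp
    ((hconv₁.subset (subset_univ S) hφ.1).add hφ) hconv₂
    (continuousOn_univ.mp (hconv₂.continuousOn isOpen_univ)) B.toLinearMap b hxs hminS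
  have hvmin' : IsMinOn (fun x => f₁ x + φ x + ⟪B.adjoint v, x⟫) S xs := fun x hx => by
    simpa only [mem_ofPred_eq, Pi.add_apply, ContinuousLinearMap.adjoint_inner_left,
      ContinuousLinearMap.coe_coe] using hvmin hx
  refine ⟨v, hv, fun γ hγ y => ?_⟩
  rw [sub_sub xs (γ • gradient f₁ xs), ← smul_add]
  by_cases hy : y ∈ S
  · rw [hcoe xs hxs, hcoe y hy]
    exact_mod_cast mul_add_half_norm_sub_sq_le
      (le_add_inner_of_isMinOn_add_inner hφ (hdiff₁ xs).hasGradientAt hxs hvmin' hy) hγ.le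
  · rw [show f₃ y = ⊤ from not_not.mp hy, EReal.coe_mul_top_of_pos hγ, EReal.top_add_coe]
    exact le_top

/-- if `x*` minimizes `f₁(x) + f₂(Bx+b) + f₃(x)`, then there exists
`v* ∈ ∂f₂(Bx*+b)` with `x* = prox_{γf₃}(x* − γ∇f₁(x*) − γBᵀv*)` for every `γ > 0`. -/
theorem optimality_prox_fixed_point (n m : ℕ)
    (f₁ : EuclideanSpace ℝ (Fin n) → ℝ)
    (hconv₁ : ConvexOn ℝ Set.univ f₁) (hdiff₁ : Differentiable ℝ f₁)
    (f₂ : EuclideanSpace ℝ (Fin m) → ℝ)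
    (hconv₂ : ConvexOn ℝ Set.univ f₂)
    (f₃ : EuclideanSpace ℝ (Fin n) → EReal)
    (hbot : ∀ x, f₃ x ≠ ⊥) (htop : ∃ x, f₃ x ≠ ⊤)
    (hlsc : LowerSemicontinuous f₃)
    (hconv₃ : ∀ x y : EuclideanSpace ℝ (Fin n), ∀ t : ℝ, 0 ≤ t → t ≤ 1 →
      f₃ (t • x + (1 - t) • y) ≤ (t : EReal) * f₃ x + ((1 - t : ℝ) : EReal) * f₃ y)
    (B : EuclideanSpace ℝ (Fin n) →L[ℝ] EuclideanSpace ℝ (Fin m))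
    (b : EuclideanSpace ℝ (Fin m))
    (xs : EuclideanSpace ℝ (Fin n))
    (hmin : ∀ y, ((f₁ xs + f₂ (B xs + b) : ℝ) : EReal) + f₃ xs
      ≤ ((f₁ y + f₂ (B y + b) : ℝ) : EReal) + f₃ y) :
    ∃ v : EuclideanSpace ℝ (Fin m),
      (∀ u, f₂ (B xs + b) + ⟪v, u - (B xs + b)⟫ ≤ f₂ u) ∧
      ∀ γ : ℝ, 0 < γ →
        ∀ y, (γ : EReal) * f₃ xs
            + ((1 / 2 * ‖(xs - γ • gradient f₁ xs - γ • B.adjoint v) - xs‖ ^ 2 : ℝ) : EReal)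
          ≤ (γ : EReal) * f₃ y
            + ((1 / 2 * ‖(xs - γ • gradient f₁ xs - γ • B.adjoint v) - y‖ ^ 2 : ℝ) : EReal) :=
  optimality_prox_fixed_point_general n m f₁ hconv₁ hdiff₁ f₂ hconv₂ f₃ hbot htop hconv₃ B b xs hmin
end
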